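/- Let H = ℍ[ℚ; −1, −7] and let O be the ℤ-submodule of H spanned by 1, i, (i + j)/2, (1 + ij)/2 (this is a subring of H), and set u = ij ∈ O, so nrm(u) = 7. Let 𝒲 be the subgroup of invertible 2×2 matrices over H generated by the Cohn matrices W(α), α ∈ O. Then for every γ ∈ 𝒲 with entries γ = [[a, b], [c, d]]: (i) c·u·conj(d) − d·u·conj(c) is scalar and lies in 7ℤ; (ii) a·u·conj(b) − b·u·conj(a) is scalar and lies in 7ℤ; (iii) a·u·conj(d) − b·u·conj(c) − u ∈ 7·O. -/

import Mathlib

/-!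
With `J = [[0, u], [−u, 0]]`, the three congruences say exactly that `γ J γᴴ = J + 7E` for a
hermitian matrix `E` over `O` (the diagonal entries of `E` are self-adjoint elements of `O`,
i.e. integers). For any star-closed subring `O` of a star ring, the unit matrices `γ` with
`γ, γ⁻¹` over `O` and `γ J γᴴ ≡ J mod n` form a subgroup, since
`(γδ) J (γδ)ᴴ = γ (δ J δᴴ) γᴴ`. It remains to check the generators:
`W(α) J W(α)ᴴ = J + diag(αu − uᾱ, 0)`, and `αu − uᾱ` is `−14` times the `ij`-coordinate of `α`,
which lies in `7ℤ` for `α ∈ O`.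
-/

open Quaternion
open scoped Quaternion

/-- The Cohn matrix `W(α) = [[α, 1], [−1, 0]]` as an invertible 2×2 matrix over a ring,
with inverse `[[0, −1], [1, α]]`. -/
def CohnUnit {A : Type*} [Ring A] (α : A) : (Matrix (Fin 2) (Fin 2) A)ˣ where
  val := !![α, 1; -1, 0]
  inv := !![0, -1; 1, α]
  val_inv := by
    ext i j
    fin_cases i <;> fin_cases j <;>
      simp [Matrix.mul_apply, Fin.sum_univ_succ, Matrix.one_apply]
  inv_val := by
    ext i j
    fin_cases i <;> fin_cases j <;>
      simp [Matrix.mul_apply, Fin.sum_univ_succ, Matrix.one_apply]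

/-- The maximal order `ℤ ⊕ ℤi ⊕ ℤ(i+j)/2 ⊕ ℤ(1+ij)/2` of `ℍ[ℚ; −1, −7]`. -/
noncomputable def order : Submodule ℤ ℍ[ℚ, -1, -7] :=
  Submodule.span ℤ
    ({1, ⟨0, 1, 0, 0⟩, ⟨0, 1 / 2, 1 / 2, 0⟩, ⟨1 / 2, 0, 0, 1 / 2⟩} :
      Set ℍ[ℚ, -1, -7])

/-- `𝒲`: the subgroup of invertible 2×2 matrices over `ℍ[ℚ; −1, −7]` generated by the
Cohn matrices `W(α)`, `α ∈ O`. -/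
noncomputable def CohnSubgroup : Subgroup (Matrix (Fin 2) (Fin 2) ℍ[ℚ, -1, -7])ˣ :=
  Subgroup.closure {γ | ∃ α ∈ order, γ = CohnUnit α}

open Matrix

section FormCongruence

variable {ι R : Type*} [Fintype ι] [DecidableEq ι] [Ring R] [StarRing R]
  {O : Subring R} {n : ℤ} {J : Matrix ι ι R}

lemma Matrix.conjTranspose_mem_matrix (hO : ∀ x ∈ O, star x ∈ O) {M : Matrix ι ι R}
    (hM : M ∈ O.matrix) : Mᴴ ∈ O.matrix :=
  fun i j => hO _ (hM j i)

def Matrix.PreservesFormMod (M : Matrix ι ι R) (O : Subring R) (n : ℤ) (J : Matrix ι ι R) :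
    Prop :=
  ∃ E ∈ O.matrix, E.IsHermitian ∧ M * J * Mᴴ = J + n • E

namespace Matrix.PreservesFormMod

lemma one : (1 : Matrix ι ι R).PreservesFormMod O n J :=
  ⟨0, zero_mem _, isHermitian_zero, by simp⟩

lemma mul (hO : ∀ x ∈ O, star x ∈ O) {M N : Matrix ι ι R} (hM : M ∈ O.matrix)
    (hMJ : M.PreservesFormMod O n J) (hNJ : N.PreservesFormMod O n J) :
    (M * N).PreservesFormMod O n J := by
  obtain ⟨E, hEO, hE, hME⟩ := hMJ
  obtain ⟨F, hFO, hF, hNF⟩ := hNJ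
  refine ⟨E + M * F * Mᴴ,
    add_mem hEO (mul_mem (mul_mem hM hFO) (conjTranspose_mem_matrix hO hM)),
    hE.add (isHermitian_mul_mul_conjTranspose M hF), ?_⟩
  calc M * N * J * (M * N)ᴴ = M * (N * J * Nᴴ) * Mᴴ := by
        simp only [conjTranspose_mul, Matrix.mul_assoc]
    _ = J + n • (E + M * F * Mᴴ) := by
        rw [hNF, Matrix.mul_add, Matrix.add_mul, hME, Matrix.mul_smul, Matrix.smul_mul,
          smul_add, add_assoc]

lemma inv (hO : ∀ x ∈ O, star x ∈ O) {γ : (Matrix ι ι R)ˣ}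
    (hγ : (↑γ⁻¹ : Matrix ι ι R) ∈ O.matrix) (hγJ : (γ : Matrix ι ι R).PreservesFormMod O n J) :
    (↑γ⁻¹ : Matrix ι ι R).PreservesFormMod O n J := by
  obtain ⟨E, hEO, hE, hγE⟩ := hγJ
  set G : Matrix ι ι R := ↑γ⁻¹
  refine ⟨-(G * E * Gᴴ), neg_mem (mul_mem (mul_mem hγ hEO) (conjTranspose_mem_matrix hO hγ)),
    (isHermitian_mul_mul_conjTranspose G hE).neg, ?_⟩
  have hGγ : G * γ = 1 := γ.inv_mul
  have hγG : (γ : Matrix ι ι R)ᴴ * Gᴴ = 1 := by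
    rw [← conjTranspose_mul, hGγ, conjTranspose_one]
  calc G * J * Gᴴ = G * (γ * J * (γ : Matrix ι ι R)ᴴ - n • E) * Gᴴ := by
        rw [hγE, add_sub_cancel_right]
    _ = J + n • -(G * E * Gᴴ) := by
        rw [Matrix.mul_sub, Matrix.sub_mul, Matrix.mul_smul, Matrix.smul_mul, smul_neg,
          ← sub_eq_add_neg]
        simp only [← Matrix.mul_assoc, hGγ, Matrix.one_mul]
        simp only [Matrix.mul_assoc, hγG, Matrix.mul_one]

end Matrix.PreservesFormMod

variable (O n J) in
def Matrix.formCongruenceSubgroup (hO : ∀ x ∈ O, star x ∈ O) : Subgroup (Matrix ι ι R)ˣ where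
  carrier := {γ | (γ : Matrix ι ι R) ∈ O.matrix ∧ (↑γ⁻¹ : Matrix ι ι R) ∈ O.matrix ∧
    (γ : Matrix ι ι R).PreservesFormMod O n J}
  one_mem' := ⟨one_mem _, one_mem _, .one⟩
  mul_mem' := fun {x y} ⟨hx, hx', hxJ⟩ ⟨hy, hy', hyJ⟩ =>
    ⟨mul_mem hx hy, by simpa using mul_mem hy' hx', .mul hO hx hxJ hyJ⟩
  inv_mem' := fun {γ} ⟨hγ, hγ', hγJ⟩ => ⟨hγ', by simpa using hγ, .inv hO hγ' hγJ⟩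

end FormCongruence

section CohnMatrices

variable {R : Type*} [Ring R] [StarRing R]

def cohnForm (u : R) : Matrix (Fin 2) (Fin 2) R := !![0, u; -u, 0]

lemma mul_cohnForm_mul_conjTranspose (M : Matrix (Fin 2) (Fin 2) R) (u : R) :
    M * cohnForm u * Mᴴ =
      !![M 0 0 * u * star (M 0 1) - M 0 1 * u * star (M 0 0),
          M 0 0 * u * star (M 1 1) - M 0 1 * u * star (M 1 0);
         M 1 0 * u * star (M 0 1) - M 1 1 * u * star (M 0 0),
          M 1 0 * u * star (M 1 1) - M 1 1 * u * star (M 1 0)] := by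
  ext i j
  fin_cases i <;> fin_cases j <;>
    simp [cohnForm, Matrix.mul_apply, Fin.sum_univ_two, mul_assoc, sub_eq_add_neg, add_comm]

lemma cohnUnit_mul_cohnForm_mul_conjTranspose (α u : R) :
    (CohnUnit α : Matrix (Fin 2) (Fin 2) R) * cohnForm u * (CohnUnit α : Matrix (Fin 2) (Fin 2) R)ᴴ
      = cohnForm u + !![α * u - u * star α, 0; 0, 0] := by
  rw [mul_cohnForm_mul_conjTranspose]
  ext i j
  fin_cases i <;> fin_cases j <;> simp [CohnUnit, cohnForm]

variable {O : Subring R} {n : ℤ} {u : R}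

lemma cohnUnit_mem_formCongruenceSubgroup (hO : ∀ x ∈ O, star x ∈ O) {α e : R} (hα : α ∈ O)
    (he : e ∈ O) (he_star : star e = e) (hαu : α * u - u * star α = n • e) :
    CohnUnit α ∈ formCongruenceSubgroup O n (cohnForm u) hO := by
  refine ⟨?_, ?_, !![e, 0; 0, 0], ?_, ?_, ?_⟩
  · intro i j
    fin_cases i <;> fin_cases j <;> simp [CohnUnit, hα]
  · intro i j
    fin_cases i <;> fin_cases j <;> simp [CohnUnit, hα]
  · intro i j
    fin_cases i <;> fin_cases j <;> simp [he]
  · ext i j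
    fin_cases i <;> fin_cases j <;> simp [he_star]
  · rw [cohnUnit_mul_cohnForm_mul_conjTranspose, hαu]
    congr 1
    ext i j
    fin_cases i <;> fin_cases j <;> simp

lemma Matrix.PreservesFormMod.cohnForm_entries {M : Matrix (Fin 2) (Fin 2) R}
    (h : M.PreservesFormMod O n (cohnForm u)) :
    (∃ e ∈ O, star e = e ∧ M 1 0 * u * star (M 1 1) - M 1 1 * u * star (M 1 0) = n • e) ∧
    (∃ e ∈ O, star e = e ∧ M 0 0 * u * star (M 0 1) - M 0 1 * u * star (M 0 0) = n • e) ∧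
    (∃ o ∈ O, M 0 0 * u * star (M 1 1) - M 0 1 * u * star (M 1 0) - u = n • o) := by
  obtain ⟨E, hEO, hE, hME⟩ := h
  rw [mul_cohnForm_mul_conjTranspose] at hME
  have hME_apply i j := congrFun₂ hME i j
  simp only [Matrix.add_apply, Matrix.smul_apply] at hME_apply
  refine ⟨⟨E 1 1, hEO 1 1, hE.apply 1 1, ?_⟩, ⟨E 0 0, hEO 0 0, hE.apply 0 0, ?_⟩,
    ⟨E 0 1, hEO 0 1, ?_⟩⟩
  · simpa [cohnForm] using hME_apply 1 1
  · simpa [cohnForm] using hME_apply 0 0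
  · simpa [cohnForm, sub_eq_iff_eq_add'] using hME_apply 0 1

end CohnMatrices

section MaximalOrder

/-- Coordinates with respect to the basis `1, i, (i + j)/2, (1 + ij)/2` of `order`. -/
def orderElem (a b c d : ℤ) : ℍ[ℚ, -1, -7] := ⟨a + d / 2, b + c / 2, c / 2, d / 2⟩

lemma mem_order_iff {x : ℍ[ℚ, -1, -7]} : x ∈ order ↔ ∃ a b c d : ℤ, x = orderElem a b c d := by
  simp only [order, Submodule.mem_span_insert, Submodule.mem_span_singleton]
  constructor
  · rintro ⟨a, _, ⟨b, _, ⟨c, _, ⟨d, rfl⟩, rfl⟩, rfl⟩, rfl⟩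
    exact ⟨a, b, c, d, by ext <;> simp [orderElem] <;> ring⟩
  · rintro ⟨a, b, c, d, rfl⟩
    exact ⟨a, _, ⟨b, _, ⟨c, _, ⟨d, rfl⟩, rfl⟩, rfl⟩, by ext <;> simp [orderElem] <;> ring⟩

lemma orderElem_mul (a b c d a' b' c' d' : ℤ) :
    orderElem a b c d * orderElem a' b' c' d' =
      orderElem (a * a' - b * b' - b * c' - 2 * c * c' - 2 * d * d')
        (a * b' + b * a' + b * d' + 2 * c * d' - 2 * d * c')
        (a * c' - b * d' + c * a' + d * b' + d * c')
        (a * d' + b * c' - c * b' + d * a' + d * d') := by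
  ext <;> simp [orderElem] <;> ring

lemma star_orderElem (a b c d : ℤ) :
    star (orderElem a b c d) = orderElem (a + d) (-b) (-c) (-d) := by
  ext <;> simp [orderElem] <;> ring

lemma orderElem_mul_ij_sub_ij_mul_star (a b c d : ℤ) :
    orderElem a b c d * ⟨0, 0, 0, 1⟩ - ⟨0, 0, 0, 1⟩ * star (orderElem a b c d)
      = (7 : ℤ) • ((-d : ℤ) : ℍ[ℚ, -1, -7]) := by
  rw [← Int.cast_smul_eq_zsmul ℚ]
  ext <;> simp [orderElem]; ring

lemma exists_intCast_eq_of_mem_order_of_star_eq {x : ℍ[ℚ, -1, -7]} (hx : x ∈ order)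
    (hx_star : star x = x) : ∃ m : ℤ, x = m := by
  obtain ⟨a, b, c, d, rfl⟩ := mem_order_iff.mp hx
  have hI := congrArg QuaternionAlgebra.imI hx_star
  have hJ := congrArg QuaternionAlgebra.imJ hx_star
  have hK := congrArg QuaternionAlgebra.imK hx_star
  simp only [orderElem, QuaternionAlgebra.imI_star, QuaternionAlgebra.imJ_star,
    QuaternionAlgebra.imK_star] at hI hJ hK
  have hc : (c : ℚ) = 0 := by linarith
  have hd : (d : ℚ) = 0 := by linarith
  have hb : (b : ℚ) = 0 := by linarith
  exact ⟨a, by ext <;> simp [orderElem, hb, hc, hd]⟩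

noncomputable def orderSubring : Subring ℍ[ℚ, -1, -7] where
  toAddSubgroup := order.toAddSubgroup
  mul_mem' {x y} hx hy := by
    obtain ⟨a, b, c, d, rfl⟩ := mem_order_iff.mp hx
    obtain ⟨a', b', c', d', rfl⟩ := mem_order_iff.mp hy
    exact mem_order_iff.mpr ⟨_, _, _, _, orderElem_mul ..⟩
  one_mem' := Submodule.subset_span (by simp)

lemma star_mem_orderSubring {x : ℍ[ℚ, -1, -7]} (hx : x ∈ orderSubring) :
    star x ∈ orderSubring := by
  obtain ⟨a, b, c, d, rfl⟩ := mem_order_iff.mp hx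
  exact mem_order_iff.mpr ⟨_, _, _, _, star_orderElem ..⟩

lemma cohnSubgroup_le_formCongruenceSubgroup :
    CohnSubgroup ≤ formCongruenceSubgroup orderSubring 7 (cohnForm ⟨0, 0, 0, 1⟩)
      (fun _ => star_mem_orderSubring) := by
  rw [CohnSubgroup, Subgroup.closure_le]
  rintro _ ⟨α, hα, rfl⟩
  obtain ⟨a, b, c, d, rfl⟩ := mem_order_iff.mp hα
  exact cohnUnit_mem_formCongruenceSubgroup _ hα (intCast_mem _ (-d)) (star_intCast _)
    (orderElem_mul_ij_sub_ij_mul_star a b c d)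

end MaximalOrder

/-- For `γ = [[a,b],[c,d]] ∈ 𝒲` and `u = ij` (of norm 7):
(i) `c·u·conj d − d·u·conj c` is a scalar in `7ℤ`;
(ii) `a·u·conj b − b·u·conj a` is a scalar in `7ℤ`;
(iii) `a·u·conj d − b·u·conj c − u ∈ 7·O`. -/
theorem cohn_congruence_neg1_neg7
    (γ : (Matrix (Fin 2) (Fin 2) ℍ[ℚ, -1, -7])ˣ) (hγ : γ ∈ CohnSubgroup)
    (u : ℍ[ℚ, -1, -7]) (hu : u = ⟨0, 0, 0, 1⟩)
    (a b c d : ℍ[ℚ, -1, -7]) (ha : a = γ.1 0 0) (hb : b = γ.1 0 1)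
    (hc : c = γ.1 1 0) (hd : d = γ.1 1 1) :
    (∃ m : ℤ, c * u * star d - d * u * star c = ((7 * m : ℤ) : ℍ[ℚ, -1, -7])) ∧
    (∃ m : ℤ, a * u * star b - b * u * star a = ((7 * m : ℤ) : ℍ[ℚ, -1, -7])) ∧
    (∃ o ∈ order, a * u * star d - b * u * star c - u = (7 : ℍ[ℚ, -1, -7]) * o) := by
  subst hu ha hb hc hd
  obtain ⟨-, -, hγJ⟩ := cohnSubgroup_le_formCongruenceSubgroup hγ
  obtain ⟨⟨e, he, he_star, hcd⟩, ⟨f, hf, hf_star, hab⟩, ⟨o, ho, had⟩⟩ := hγJ.cohnForm_entries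
  obtain ⟨m, rfl⟩ := exists_intCast_eq_of_mem_order_of_star_eq he he_star
  obtain ⟨m', rfl⟩ := exists_intCast_eq_of_mem_order_of_star_eq hf hf_star
  exact ⟨⟨m, by rw [hcd, zsmul_eq_mul]; push_cast; rfl⟩,
    ⟨m', by rw [hab, zsmul_eq_mul]; push_cast; rfl⟩, ⟨o, ho, by rw [had, zsmul_eq_mul]; rfl⟩⟩
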